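/- arXiv:2604.19911 — 2 statements merged into one kernel-verified Lean document; each statement's English description precedes it below -/
import Mathlib

section
/- (Theorem 1(ii)) In the variant of 3-bit PMRAC, suppose the average success probability attains the optimal value S_Q = 1/2 + 1/√6. Then for all x, x' ∈ {0,1}³ with x ≠ x': Tr[ρ_x ρ_{x'}] = 0 whenever x' is the bitwise complement x̄ of x or x' lies in the same parity class as x, and Tr[ρ_x ρ_{x'}] = 1/3 whenever x' lies in the opposite parity class and x' ≠ x̄. -/
open Matrix
open scoped Kronecker ComplexOrder

noncomputable section

abbrev Mat2 := Matrix (Fin 2) (Fin 2) ℂ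
abbrev Mat4 := Matrix (Fin 2 × Fin 2) (Fin 2 × Fin 2) ℂ

/-- parity of x₁+x₂+x₃ (addition in Fin 2 is mod 2). -/
def par (x : Fin 3 → Fin 2) : Fin 2 := x 0 + x 1 + x 2

/-- bitwise complement of x ∈ {0,1}³. -/
def bitcompl (x : Fin 3 → Fin 2) : Fin 3 → Fin 2 := fun i => x i + 1

/-- The state ρ_x = (U_x ⊗ I₂) ρ (U_x ⊗ I₂)†. -/
def ρst (ρ : Mat4) (U : (Fin 3 → Fin 2) → Mat2) (x : Fin 3 → Fin 2) : Mat4 :=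
  (U x ⊗ₖ (1 : Mat2)) * ρ * (U x ⊗ₖ (1 : Mat2))ᴴ

/-!
Write `S_y = ∑ₓ (-1)^{x_y} ρₓ` and `W = ∑ₓ (-1)^{par x} ρₓ`. Orthogonality of the characters of
`(ℤ/2)³` indexed by `e₁, e₂, e₃, (1,1,1)` gives `∑_y S_y² + W² = 4 ∑ₓ ρₓ² - 4 ∑ₓ ρₓ ρ_x̄`, so
`∑_y tr S_y² ≤ 32`, with equality only if every `ρₓ` is pure, `ρₓ ρ_x̄ = 0` and `W = 0`. On the
other hand `S_Q = 1/2 + (1/48) ∑_y tr (S_y B_y)`, and `∑_y tr (S_y - κ B_y)² ≥ 0` with `κ² = 8/3`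
shows that the optimal value forces `∑_y tr S_y² ≥ 32`; so all the equalities hold and moreover
`S_y = κ B_y`, i.e. `S_y² = 8/3`.

Then `∑ₓ ρₓ = 2`, and since `W = 0` each parity class sums to `1`, hence consists of mutually
orthogonal projections. Splitting `S_y = P_y + Q_y` along the two classes, `P_y² = Q_y² = 1`, so
`P_y Q_y + Q_y P_y = 2/3`; as `ρₓ` is an eigenprojection of `P_y` this gives
`tr (ρₓ Q_y) = (-1)^{x_y}/3`, and Fourier inversion on the class of `x'` gives
`tr (ρₓ ρ_{x'}) = 1/3`.
-/

namespace Matrix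

variable {𝕜 n : Type*} [RCLike 𝕜] [Fintype n]

open scoped MatrixOrder in
theorem PosSemidef.exists_eq_conjTranspose_mul_self [DecidableEq n] {P : Matrix n n 𝕜}
    (hP : P.PosSemidef) : ∃ X : Matrix n n 𝕜, P = Xᴴ * X :=
  ⟨CFC.sqrt P, by
    rw [← star_eq_conjTranspose, (CFC.sqrt_nonneg P).isSelfAdjoint.star_eq,
      CFC.sqrt_mul_sqrt_self P hP.nonneg]⟩

theorem trace_conjTranspose_mul_self_mul_conjTranspose_mul_self (X Y : Matrix n n 𝕜) :
    (Xᴴ * X * (Yᴴ * Y)).trace = ((Y * Xᴴ)ᴴ * (Y * Xᴴ)).trace := by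
  rw [conjTranspose_mul, conjTranspose_conjTranspose, Matrix.mul_assoc, trace_mul_comm]
  simp only [Matrix.mul_assoc]

theorem PosSemidef.trace_mul_nonneg {P Q : Matrix n n 𝕜} (hP : P.PosSemidef)
    (hQ : Q.PosSemidef) : 0 ≤ (P * Q).trace := by
  classical
  obtain ⟨X, rfl⟩ := hP.exists_eq_conjTranspose_mul_self
  obtain ⟨Y, rfl⟩ := hQ.exists_eq_conjTranspose_mul_self
  rw [trace_conjTranspose_mul_self_mul_conjTranspose_mul_self]
  exact (posSemidef_conjTranspose_mul_self _).trace_nonneg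

theorem PosSemidef.mul_eq_zero_of_trace_mul_eq_zero {P Q : Matrix n n 𝕜} (hP : P.PosSemidef)
    (hQ : Q.PosSemidef) (h : (P * Q).trace = 0) : P * Q = 0 := by
  classical
  obtain ⟨X, rfl⟩ := hP.exists_eq_conjTranspose_mul_self
  obtain ⟨Y, rfl⟩ := hQ.exists_eq_conjTranspose_mul_self
  rw [trace_conjTranspose_mul_self_mul_conjTranspose_mul_self,
    trace_conjTranspose_mul_self_eq_zero_iff] at h
  calc Xᴴ * X * (Yᴴ * Y) = Xᴴ * (Y * Xᴴ)ᴴ * Y := by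
        rw [conjTranspose_mul, conjTranspose_conjTranspose]; simp only [Matrix.mul_assoc]
    _ = 0 := by rw [h, conjTranspose_zero, Matrix.mul_zero, Matrix.zero_mul]

theorem IsHermitian.trace_mul_self_nonneg {M : Matrix n n 𝕜} (hM : M.IsHermitian) :
    0 ≤ (M * M).trace := by
  simpa only [hM.eq] using (posSemidef_conjTranspose_mul_self M).trace_nonneg

theorem IsHermitian.trace_mul_self_eq_zero_iff {M : Matrix n n 𝕜} (hM : M.IsHermitian) :
    (M * M).trace = 0 ↔ M = 0 := by
  simpa only [hM.eq] using trace_conjTranspose_mul_self_eq_zero_iff (A := M)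

open scoped MatrixOrder in
/-- A density matrix has its spectrum in `[0, 1]`, hence `ρ ≥ ρ²`. -/
theorem PosSemidef.posSemidef_sub_mul_self_of_trace_eq_one [DecidableEq n]
    {ρ : Matrix n n 𝕜} (hρ : ρ.PosSemidef) (htr : ρ.trace = 1) :
    (ρ - ρ * ρ).PosSemidef := by
  have hsum : ∑ i, hρ.1.eigenvalues i = 1 := by
    have := hρ.1.trace_eq_sum_eigenvalues
    rw [htr] at this
    exact_mod_cast this.symm
  have hle (i : n) : hρ.1.eigenvalues i ≤ 1 :=
    hsum ▸ Finset.single_le_sum (fun j _ => hρ.eigenvalues_nonneg j) (Finset.mem_univ i)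
  rw [← nonneg_iff_posSemidef]
  have : IsSelfAdjoint ρ := hρ.1
  rw [show ρ - ρ * ρ = cfc (fun t : ℝ => t - t * t) ρ by
    rw [cfc_sub _ _ ρ, cfc_mul _ _ ρ, cfc_id' ℝ ρ]]
  refine cfc_nonneg fun t ht => ?_
  rw [hρ.1.spectrum_real_eq_range_eigenvalues] at ht
  obtain ⟨i, rfl⟩ := ht
  nlinarith [hρ.eigenvalues_nonneg i, hle i]

theorem mul_eq_zero_of_posSemidef_of_sum_eq_one [DecidableEq n] {ι : Type*} {s : Finset ι}
    {P : ι → Matrix n n 𝕜} (hpsd : ∀ i ∈ s, (P i).PosSemidef)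
    (hidem : ∀ i ∈ s, IsIdempotentElem (P i)) (hsum : ∑ i ∈ s, P i = 1) {i j : ι}
    (hi : i ∈ s) (hj : j ∈ s) (hij : i ≠ j) : P i * P j = 0 := by
  classical
  have htr : ∑ k ∈ s.erase i, (P i * P k).trace = 0 := by
    have h := congrArg (fun M => (P i * M).trace) hsum
    simp only [Finset.mul_sum, trace_sum, Matrix.mul_one] at h
    rwa [← Finset.add_sum_erase _ _ hi, (hidem i hi).eq, add_eq_left] at h
  refine (hpsd i hi).mul_eq_zero_of_trace_mul_eq_zero (hpsd j hj) ?_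
  exact (Finset.sum_eq_zero_iff_of_nonneg fun k hk =>
    (hpsd i hi).trace_mul_nonneg (hpsd k (Finset.mem_of_mem_erase hk))).mp htr j
      (Finset.mem_erase.mpr ⟨hij.symm, hj⟩)

theorem trace_sub_smul_mul_self {R : Type*} [CommRing R] [DecidableEq n] {S B : Matrix n n R}
    (hB : B * B = 1) (c : R) :
    ((S - c • B) * (S - c • B)).trace
      = (S * S).trace - 2 * c * (S * B).trace + c ^ 2 * Fintype.card n := by
  simp only [sub_mul, mul_sub, smul_mul_assoc, mul_smul_comm, hB,
    trace_sub, trace_smul, trace_one, trace_mul_comm B S, smul_eq_mul]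
  ring

end Matrix

theorem neg_one_pow_mul_self (k : ℕ) : (-1 : ℂ) ^ k * (-1) ^ k = 1 := by
  rw [← mul_pow, neg_one_mul, neg_neg, one_pow]

section OrthogonalFamily

variable {R ι : Type*} [Ring R] [Algebra ℂ R] {s : Finset ι} {P : ι → R}

theorem mul_sum_smul_of_orthogonal (hidem : ∀ i ∈ s, IsIdempotentElem (P i))
    (horth : ∀ i ∈ s, ∀ j ∈ s, i ≠ j → P i * P j = 0) (ε : ι → ℂ) {k : ι} (hk : k ∈ s) :
    P k * ∑ i ∈ s, ε i • P i = ε k • P k := by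
  rw [Finset.mul_sum, Finset.sum_eq_single_of_mem k hk, mul_smul_comm, (hidem k hk).eq]
  intro i hi hik
  rw [mul_smul_comm, horth k hk i hi (Ne.symm hik), smul_zero]

theorem sum_smul_mul_of_orthogonal (hidem : ∀ i ∈ s, IsIdempotentElem (P i))
    (horth : ∀ i ∈ s, ∀ j ∈ s, i ≠ j → P i * P j = 0) (ε : ι → ℂ) {k : ι} (hk : k ∈ s) :
    (∑ i ∈ s, ε i • P i) * P k = ε k • P k := by
  rw [Finset.sum_mul, Finset.sum_eq_single_of_mem k hk, smul_mul_assoc, (hidem k hk).eq]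
  intro i hi hik
  rw [smul_mul_assoc, horth i hi k hk hik, smul_zero]

theorem sum_smul_mul_self_of_orthogonal (hidem : ∀ i ∈ s, IsIdempotentElem (P i))
    (horth : ∀ i ∈ s, ∀ j ∈ s, i ≠ j → P i * P j = 0) (hsum : ∑ i ∈ s, P i = 1)
    {ε : ι → ℂ} (hε : ∀ i ∈ s, ε i * ε i = 1) :
    (∑ i ∈ s, ε i • P i) * (∑ i ∈ s, ε i • P i) = 1 := by
  rw [← hsum, Finset.sum_mul]
  refine Finset.sum_congr rfl fun i hi => ?_
  rw [smul_mul_assoc, mul_sum_smul_of_orthogonal hidem horth ε hi, smul_smul, hε i hi, one_smul]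

end OrthogonalFamily

namespace PMRAC

def parityClass (u : Fin 2) : Finset (Fin 3 → Fin 2) := {z | par z = u}

theorem mem_parityClass {u : Fin 2} {z : Fin 3 → Fin 2} : z ∈ parityClass u ↔ par z = u := by
  simp [parityClass]

theorem sum_parityClass_add_sum_parityClass {M : Type*} [AddCommMonoid M]
    (f : (Fin 3 → Fin 2) → M) {u v : Fin 2} (huv : u ≠ v) :
    ∑ z ∈ parityClass u, f z + ∑ z ∈ parityClass v, f z = ∑ z, f z := by
  rw [← Finset.sum_filter_add_sum_filter_not Finset.univ (fun z => par z = u)]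
  congr 2
  exact Finset.filter_congr fun z _ => by omega

theorem sum_sign_mul_sign_add_parity (x x' : Fin 3 → Fin 2) :
    ∑ y, (-1 : ℂ) ^ (x y).val * (-1) ^ (x' y).val + (-1) ^ (par x).val * (-1) ^ (par x').val
      = (if x' = x then 4 else 0) - (if x' = bitcompl x then 4 else 0) := by
  have key : ∀ x x' : Fin 3 → Fin 2,
      ∑ y, (-1 : ℤ) ^ (x y).val * (-1) ^ (x' y).val + (-1) ^ (par x).val * (-1) ^ (par x').val
        = (if x' = x then 4 else 0) - (if x' = bitcompl x then 4 else 0) := by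
    decide
  exact_mod_cast key x x'

theorem one_add_sum_sign_mul_sign_of_par_eq {z x : Fin 3 → Fin 2} (h : par z = par x) :
    1 + ∑ y, (-1 : ℂ) ^ (x y).val * (-1) ^ (z y).val = if z = x then 4 else 0 := by
  have key : ∀ z x : Fin 3 → Fin 2, par z = par x →
      1 + ∑ y, (-1 : ℤ) ^ (x y).val * (-1) ^ (z y).val = if z = x then 4 else 0 := by
    decide
  exact_mod_cast key z x h

theorem sum_sign_mul_sign_of_par_ne {x x' : Fin 3 → Fin 2} (hpar : par x ≠ par x')
    (hx' : x' ≠ bitcompl x) : ∑ y, (-1 : ℂ) ^ (x y).val * (-1) ^ (x' y).val = 1 := by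
  have key : ∀ x x' : Fin 3 → Fin 2, par x ≠ par x' → x' ≠ bitcompl x →
      ∑ y, (-1 : ℤ) ^ (x y).val * (-1) ^ (x' y).val = 1 := by
    decide
  exact_mod_cast key x x' hpar hx'

section SignedSums

variable {R : Type*} [Ring R] [Algebra ℂ R]

def signedSum (A : (Fin 3 → Fin 2) → R) (y : Fin 3) : R := ∑ x, (-1 : ℂ) ^ (x y).val • A x

def paritySignedSum (A : (Fin 3 → Fin 2) → R) : R := ∑ x, (-1 : ℂ) ^ (par x).val • A x

theorem sum_signedSum_mul_self_add_paritySignedSum_mul_self (A : (Fin 3 → Fin 2) → R) :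
    ∑ y, signedSum A y * signedSum A y + paritySignedSum A * paritySignedSum A
      = (4 : ℂ) • ∑ x, A x * A x - (4 : ℂ) • ∑ x, A x * A (bitcompl x) := by
  calc _ = ∑ x, ∑ x', (∑ y, (-1 : ℂ) ^ (x y).val * (-1) ^ (x' y).val
          + (-1) ^ (par x).val * (-1) ^ (par x').val) • (A x * A x') := by
        simp only [signedSum, paritySignedSum, Finset.sum_mul_sum, smul_mul_smul_comm, add_smul,
          Finset.sum_smul, Finset.sum_add_distrib]
        rw [Finset.sum_comm]
        simp only [Finset.sum_comm (s := (Finset.univ : Finset (Fin 3)))]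
    _ = ∑ x, ((4 : ℂ) • (A x * A x) - (4 : ℂ) • (A x * A (bitcompl x))) := by
        simp only [sum_sign_mul_sign_add_parity, sub_smul, ite_smul, zero_smul,
          Finset.sum_sub_distrib, Finset.sum_ite_eq', Finset.mem_univ, if_true]
    _ = _ := by rw [Finset.sum_sub_distrib, Finset.smul_sum, Finset.smul_sum]

end SignedSums

section SuccessProbability

variable {n : Type*} [Fintype n] [DecidableEq n]

def successProb (A : (Fin 3 → Fin 2) → Matrix n n ℂ) (B : Fin 3 → Matrix n n ℂ) : ℂ :=
  (24 : ℂ)⁻¹ * ∑ y, ∑ x, (A x * ((2 : ℂ)⁻¹ • (1 + (-1 : ℂ) ^ (x y).val • B y))).trace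

theorem successProb_eq {A : (Fin 3 → Fin 2) → Matrix n n ℂ} (htr : ∀ x, (A x).trace = 1)
    (B : Fin 3 → Matrix n n ℂ) :
    successProb A B = 2⁻¹ + 48⁻¹ * ∑ y, (signedSum A y * B y).trace := by
  simp only [successProb, signedSum, mul_smul_comm, mul_add, mul_one, trace_smul, trace_add,
    htr, smul_eq_mul, Finset.sum_mul, trace_sum, smul_mul_assoc, Finset.sum_add_distrib,
    Finset.mul_sum, Finset.sum_const, Finset.card_univ, Fintype.card_pi, Fintype.card_fin]
  norm_num [← mul_assoc]

theorem sum_trace_signedSum_mul_of_successProb_eq {A : (Fin 3 → Fin 2) → Matrix n n ℂ}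
    {B : Fin 3 → Matrix n n ℂ} (htr : ∀ x, (A x).trace = 1)
    (hopt : successProb A B = ((1 / 2 + 1 / Real.sqrt 6 : ℝ) : ℂ)) :
    ∑ y, (signedSum A y * B y).trace = ((8 * Real.sqrt 6 : ℝ) : ℂ) := by
  have h6 : 48 * (1 / 2 + 1 / √6) - 24 = 8 * √6 := by
    have : 0 < √6 := by positivity
    field_simp
    rw [Real.sq_sqrt (by norm_num)]
    ring
  rw [successProb_eq htr] at hopt
  calc _ = 48 * (2⁻¹ + 48⁻¹ * ∑ y, (signedSum A y * B y).trace) - 24 := by ring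
    _ = _ := by rw [hopt, ← h6]; push_cast; ring

theorem isHermitian_signedSum {A : (Fin 3 → Fin 2) → Matrix n n ℂ}
    (hA : ∀ x, (A x).IsHermitian) (y : Fin 3) : (signedSum A y).IsHermitian :=
  isSelfAdjoint_sum _ fun x _ => (((IsSelfAdjoint.one ℂ).neg).pow _).smul (hA x)

theorem isHermitian_paritySignedSum {A : (Fin 3 → Fin 2) → Matrix n n ℂ}
    (hA : ∀ x, (A x).IsHermitian) : (paritySignedSum A).IsHermitian :=
  isSelfAdjoint_sum _ fun x _ => (((IsSelfAdjoint.one ℂ).neg).pow _).smul (hA x)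

end SuccessProbability

section Optimality

variable {A : (Fin 3 → Fin 2) → Mat4} {B : Fin 3 → Mat4}

/-- `κ = √(8/3)`, so that at the optimal value `∑ y, tr (S_y - κ B_y)² = ∑ y, tr S_y² - 32`. -/
def κ : ℂ := ((2 * Real.sqrt 6 / 3 : ℝ) : ℂ)

theorem κ_mul_self : κ * κ = 8 / 3 := by
  rw [κ, ← Complex.ofReal_mul, show 2 * √6 / 3 * (2 * √6 / 3) = 4 * (√6 * √6) / 9 by ring,
    Real.mul_self_sqrt (by norm_num)]
  push_cast; norm_num

theorem κ_mul_eight_sqrt_six : κ * ((8 * Real.sqrt 6 : ℝ) : ℂ) = 32 := by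
  rw [κ, ← Complex.ofReal_mul, show 2 * √6 / 3 * (8 * √6) = 16 * (√6 * √6) / 3 by ring,
    Real.mul_self_sqrt (by norm_num)]
  push_cast; norm_num

theorem sum_trace_sq_add_defects_eq_zero (htr : ∀ x, (A x).trace = 1)
    (hB2 : ∀ y, B y * B y = 1)
    (hcorr : ∑ y, (signedSum A y * B y).trace = ((8 * Real.sqrt 6 : ℝ) : ℂ)) :
    ∑ y, ((signedSum A y - κ • B y) * (signedSum A y - κ • B y)).trace
      + (paritySignedSum A * paritySignedSum A).trace
      + 4 * ∑ x, (A x * A (bitcompl x)).trace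
      + 4 * ∑ x, (A x - A x * A x).trace = 0 := by
  have hmaster := congrArg trace (sum_signedSum_mul_self_add_paritySignedSum_mul_self A)
  simp only [trace_add, trace_sub, trace_smul, trace_sum, smul_eq_mul] at hmaster
  simp only [trace_sub_smul_mul_self (hB2 _), trace_sub, htr, Finset.sum_sub_distrib,
    Finset.sum_add_distrib, ← Finset.mul_sum, hcorr, Finset.sum_const, Finset.card_univ,
    Fintype.card_pi, Fintype.card_fin, Fintype.card_prod]
  linear_combination hmaster - 2 * κ_mul_eight_sqrt_six + 12 * κ_mul_self

theorem defects_eq_zero (hpsd : ∀ x, (A x).PosSemidef) (htr : ∀ x, (A x).trace = 1)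
    (hB : ∀ y, (B y).IsHermitian) (hB2 : ∀ y, B y * B y = 1)
    (hcorr : ∑ y, (signedSum A y * B y).trace = ((8 * Real.sqrt 6 : ℝ) : ℂ)) :
    (∀ y, ((signedSum A y - κ • B y) * (signedSum A y - κ • B y)).trace = 0) ∧
      (paritySignedSum A * paritySignedSum A).trace = 0 ∧
      (∀ x, (A x * A (bitcompl x)).trace = 0) ∧ ∀ x, (A x - A x * A x).trace = 0 := by
  have hM (y : Fin 3) : 0 ≤ ((signedSum A y - κ • B y) * (signedSum A y - κ • B y)).trace :=
    ((isHermitian_signedSum (fun x => (hpsd x).isHermitian) y).sub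
      (IsSelfAdjoint.smul (Complex.conj_ofReal _) (hB y))).trace_mul_self_nonneg
  have hW := (isHermitian_paritySignedSum fun x => (hpsd x).isHermitian).trace_mul_self_nonneg
  have hC (x : Fin 3 → Fin 2) : 0 ≤ (A x * A (bitcompl x)).trace :=
    (hpsd x).trace_mul_nonneg (hpsd _)
  have hR (x : Fin 3 → Fin 2) : 0 ≤ (A x - A x * A x).trace :=
    ((hpsd x).posSemidef_sub_mul_self_of_trace_eq_one (htr x)).trace_nonneg
  have hMs : 0 ≤ ∑ y, ((signedSum A y - κ • B y) * (signedSum A y - κ • B y)).trace :=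
    Finset.sum_nonneg fun y _ => hM y
  have hCs : 0 ≤ 4 * ∑ x, (A x * A (bitcompl x)).trace :=
    mul_nonneg (by norm_num) (Finset.sum_nonneg fun x _ => hC x)
  have hRs : 0 ≤ 4 * ∑ x, (A x - A x * A x).trace :=
    mul_nonneg (by norm_num) (Finset.sum_nonneg fun x _ => hR x)
  obtain ⟨h123, hRz⟩ := (add_eq_zero_iff_of_nonneg (add_nonneg (add_nonneg hMs hW) hCs)
    hRs).mp (sum_trace_sq_add_defects_eq_zero htr hB2 hcorr)
  obtain ⟨h12, hCz⟩ := (add_eq_zero_iff_of_nonneg (add_nonneg hMs hW) hCs).mp h123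
  obtain ⟨hMz, hWz⟩ := (add_eq_zero_iff_of_nonneg hMs hW).mp h12
  refine ⟨fun y => ?_, hWz, fun x => ?_, fun x => ?_⟩
  · exact (Finset.sum_eq_zero_iff_of_nonneg fun y _ => hM y).mp hMz y (Finset.mem_univ y)
  · exact (Finset.sum_eq_zero_iff_of_nonneg fun x _ => hC x).mp
      ((mul_eq_zero.mp hCz).resolve_left four_ne_zero) x (Finset.mem_univ x)
  · exact (Finset.sum_eq_zero_iff_of_nonneg fun x _ => hR x).mp
      ((mul_eq_zero.mp hRz).resolve_left four_ne_zero) x (Finset.mem_univ x)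

theorem optimal_consequences (hpsd : ∀ x, (A x).PosSemidef) (htr : ∀ x, (A x).trace = 1)
    (hB : ∀ y, (B y).IsHermitian) (hB2 : ∀ y, B y * B y = 1)
    (hcorr : ∑ y, (signedSum A y * B y).trace = ((8 * Real.sqrt 6 : ℝ) : ℂ)) :
    (∀ y, signedSum A y * signedSum A y = (8 / 3 : ℂ) • 1) ∧ paritySignedSum A = 0 ∧
      (∀ x, A x * A (bitcompl x) = 0) ∧ ∀ x, IsIdempotentElem (A x) := by
  obtain ⟨hM, hW, hC, hR⟩ := defects_eq_zero hpsd htr hB hB2 hcorr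
  have hAherm (x : Fin 3 → Fin 2) : (A x).IsHermitian := (hpsd x).isHermitian
  refine ⟨fun y => ?_, (isHermitian_paritySignedSum hAherm).trace_mul_self_eq_zero_iff.mp hW,
    fun x => (hpsd x).mul_eq_zero_of_trace_mul_eq_zero (hpsd _) (hC x), fun x => ?_⟩
  · have hSB : signedSum A y = κ • B y := sub_eq_zero.mp <|
      ((isHermitian_signedSum hAherm y).sub
        (IsSelfAdjoint.smul (Complex.conj_ofReal _) (hB y))).trace_mul_self_eq_zero_iff.mp (hM y)
    rw [hSB, smul_mul_smul_comm, hB2, κ_mul_self]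
  · exact (sub_eq_zero.mp
      (((hpsd x).posSemidef_sub_mul_self_of_trace_eq_one (htr x)).trace_eq_zero_iff.mp
        (hR x))).symm

end Optimality

section Structure

variable {R : Type*} [Ring R] [Algebra ℂ R] {A : (Fin 3 → Fin 2) → R}

theorem sum_eq_two_smul_one (hidem : ∀ x, IsIdempotentElem (A x))
    (hS : ∀ y, signedSum A y * signedSum A y = (8 / 3 : ℂ) • 1) (hW : paritySignedSum A = 0)
    (hcompl : ∀ x, A x * A (bitcompl x) = 0) : ∑ x, A x = (2 : ℂ) • 1 := by
  have h := sum_signedSum_mul_self_add_paritySignedSum_mul_self A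
  simp only [hS, hW, hcompl, (hidem _).eq, mul_zero, add_zero, Finset.sum_const_zero,
    smul_zero, sub_zero, Finset.sum_const, Finset.card_univ, Fintype.card_fin] at h
  calc ∑ x, A x = (4 : ℂ)⁻¹ • ((4 : ℂ) • ∑ x, A x) := by rw [smul_smul]; norm_num
    _ = (2 : ℂ) • 1 := by rw [← h, ← Nat.cast_smul_eq_nsmul ℂ, smul_smul, smul_smul]; norm_num

theorem paritySignedSum_eq_sub (A : (Fin 3 → Fin 2) → R) :
    paritySignedSum A = ∑ z ∈ parityClass 0, A z - ∑ z ∈ parityClass 1, A z := by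
  rw [paritySignedSum, ← sum_parityClass_add_sum_parityClass _ zero_ne_one, sub_eq_add_neg,
    ← Finset.sum_neg_distrib]
  congr 1 <;> refine Finset.sum_congr rfl fun z hz => ?_ <;> simp [mem_parityClass.mp hz]

theorem sum_parityClass_eq_one (hsum : ∑ x, A x = (2 : ℂ) • 1) (hW : paritySignedSum A = 0)
    (u : Fin 2) : ∑ z ∈ parityClass u, A z = 1 := by
  have heq := sub_eq_zero.mp ((paritySignedSum_eq_sub A).symm.trans hW)
  have h0 : ∑ z ∈ parityClass 0, A z = 1 := by
    have h2 : (2 : ℂ) • ∑ z ∈ parityClass 0, A z = (2 : ℂ) • 1 := by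
      rw [two_smul]
      nth_rewrite 2 [heq]
      rw [sum_parityClass_add_sum_parityClass _ zero_ne_one, hsum]
    exact smul_right_injective R two_ne_zero h2
  fin_cases u
  · exact h0
  · exact heq ▸ h0

end Structure

section Overlaps

variable {n : Type*} [Fintype n] [DecidableEq n] {A : (Fin 3 → Fin 2) → Matrix n n ℂ}

theorem mul_eq_zero_of_par_eq (hpsd : ∀ x, (A x).PosSemidef)
    (hidem : ∀ x, IsIdempotentElem (A x)) (hclass : ∀ u, ∑ z ∈ parityClass u, A z = 1)
    {z z' : Fin 3 → Fin 2} (hne : z ≠ z') (hpar : par z = par z') : A z * A z' = 0 :=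
  Matrix.mul_eq_zero_of_posSemidef_of_sum_eq_one (fun x _ => hpsd x) (fun x _ => hidem x)
    (hclass (par z)) (mem_parityClass.mpr rfl) (mem_parityClass.mpr hpar.symm) hne

theorem trace_mul_sum_parityClass_smul (htr : ∀ x, (A x).trace = 1)
    (hidem : ∀ x, IsIdempotentElem (A x))
    (hS : ∀ y, signedSum A y * signedSum A y = (8 / 3 : ℂ) • 1)
    (hclass : ∀ u, ∑ z ∈ parityClass u, A z = 1)
    (horth : ∀ z z', z ≠ z' → par z = par z' → A z * A z' = 0)
    {x : Fin 3 → Fin 2} {v : Fin 2} (hv : par x ≠ v) (y : Fin 3) :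
    (A x * ∑ z ∈ parityClass v, (-1 : ℂ) ^ (z y).val • A z).trace = (-1 : ℂ) ^ (x y).val / 3 := by
  have hidem' (u : Fin 2) : ∀ z ∈ parityClass u, IsIdempotentElem (A z) := fun z _ => hidem z
  have horth' (u : Fin 2) : ∀ z ∈ parityClass u, ∀ z' ∈ parityClass u, z ≠ z' → A z * A z' = 0 :=
    fun z hz z' hz' hne =>
      horth z z' hne ((mem_parityClass.mp hz).trans (mem_parityClass.mp hz').symm)
  set ε : (Fin 3 → Fin 2) → ℂ := fun z => (-1 : ℂ) ^ (z y).val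
  set P := ∑ z ∈ parityClass (par x), ε z • A z
  set Q := ∑ z ∈ parityClass v, ε z • A z
  have hsplit : signedSum A y = P + Q := (sum_parityClass_add_sum_parityClass _ hv).symm
  have hsq (u : Fin 2) : (∑ z ∈ parityClass u, ε z • A z) * (∑ z ∈ parityClass u, ε z • A z) = 1 :=
    sum_smul_mul_self_of_orthogonal (hidem' u) (horth' u) (hclass u)
      fun z _ => neg_one_pow_mul_self _
  have hPP : P * P = 1 := hsq _
  have hQQ : Q * Q = 1 := hsq _
  have hx : x ∈ parityClass (par x) := mem_parityClass.mpr rfl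
  have hxP : A x * P = ε x • A x := mul_sum_smul_of_orthogonal (hidem' _) (horth' _) ε hx
  have hPx : P * A x = ε x • A x := sum_smul_mul_of_orthogonal (hidem' _) (horth' _) ε hx
  have hkey : (A x * (signedSum A y * signedSum A y)).trace
      = 2 + 2 * ε x * (A x * Q).trace := by
    rw [hsplit, show (P + Q) * (P + Q) = 1 + 1 + (P * Q + Q * P) by
      rw [add_mul, mul_add P, mul_add Q, hPP, hQQ]; abel]
    simp only [mul_add, trace_add, Matrix.mul_one, htr, ← Matrix.mul_assoc, hxP,
      smul_mul_assoc, trace_smul, smul_eq_mul]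
    rw [trace_mul_cycle, hPx, smul_mul_assoc, trace_smul, smul_eq_mul]
    ring
  rw [hS, mul_smul_comm, Matrix.mul_one, trace_smul, htr, smul_eq_mul, mul_one] at hkey
  linear_combination (-ε x / 2) * hkey - (A x * Q).trace * neg_one_pow_mul_self (x y).val

theorem trace_mul_eq_one_third (htr : ∀ x, (A x).trace = 1)
    (hidem : ∀ x, IsIdempotentElem (A x))
    (hS : ∀ y, signedSum A y * signedSum A y = (8 / 3 : ℂ) • 1)
    (hclass : ∀ u, ∑ z ∈ parityClass u, A z = 1)
    (horth : ∀ z z', z ≠ z' → par z = par z' → A z * A z' = 0)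
    {x x' : Fin 3 → Fin 2} (hpar : par x ≠ par x') (hx' : x' ≠ bitcompl x) :
    (A x * A x').trace = 1 / 3 := by
  have hfourier : ∑ z ∈ parityClass (par x'),
      (1 + ∑ y, (-1 : ℂ) ^ (x' y).val * (-1) ^ (z y).val) * (A x * A z).trace
        = 4 * (A x * A x').trace := by
    rw [Finset.sum_congr rfl fun z hz => by
      rw [one_add_sum_sign_mul_sign_of_par_eq (mem_parityClass.mp hz)]]
    simp [ite_mul, Finset.sum_ite_eq', mem_parityClass]
  have hsum : ∑ z ∈ parityClass (par x'),
      (1 + ∑ y, (-1 : ℂ) ^ (x' y).val * (-1) ^ (z y).val) * (A x * A z).trace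
        = (A x * ∑ z ∈ parityClass (par x'), A z).trace + ∑ y, (-1 : ℂ) ^ (x' y).val *
          (A x * ∑ z ∈ parityClass (par x'), (-1 : ℂ) ^ (z y).val • A z).trace := by
    simp only [add_mul, one_mul, Finset.sum_add_distrib, Finset.sum_mul, Finset.mul_sum,
      trace_sum, mul_smul_comm, trace_smul, smul_eq_mul, mul_assoc]
    rw [Finset.sum_comm]
  rw [hsum, hclass, Matrix.mul_one, htr] at hfourier
  have hsigns : ∑ y, (-1 : ℂ) ^ (x' y).val * ((-1) ^ (x y).val / 3) = 1 / 3 := by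
    calc _ = (∑ y, (-1 : ℂ) ^ (x y).val * (-1) ^ (x' y).val) / 3 := by
          rw [Finset.sum_div]; exact Finset.sum_congr rfl fun y _ => by ring
      _ = 1 / 3 := by rw [sum_sign_mul_sign_of_par_ne hpar hx']
  simp only [trace_mul_sum_parityClass_smul htr hidem hS hclass horth hpar, hsigns] at hfourier
  linear_combination -hfourier / 4

end Overlaps

theorem trace_ρst {ρ : Mat4} (hρtr : ρ.trace = 1) {U : (Fin 3 → Fin 2) → Mat2}
    (hU : ∀ x, U x ∈ Matrix.unitaryGroup (Fin 2) ℂ) (x : Fin 3 → Fin 2) :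
    (ρst ρ U x).trace = 1 := by
  have hV : U x ⊗ₖ (1 : Mat2) ∈ unitary Mat4 := kronecker_mem_unitary (hU x) (one_mem _)
  rw [ρst, trace_mul_cycle, ← star_eq_conjTranspose, Unitary.star_mul_self_of_mem hV,
    Matrix.one_mul, hρtr]

end PMRAC

open PMRAC

/-- Theorem 1(ii): if the average success probability of the variant of 3-bit
PMRAC attains the optimal value 1/2 + 1/√6, then for all x ≠ x',
Tr[ρ_x ρ_{x'}] = 0 whenever x' is the bitwise complement of x or lies in the
same parity class as x, and Tr[ρ_x ρ_{x'}] = 1/3 otherwise. -/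
theorem optimal_implies_overlap_structure
    (ρ : Mat4) (hρ : ρ.PosSemidef) (hρtr : ρ.trace = 1)
    (U : (Fin 3 → Fin 2) → Mat2)
    (hU : ∀ x, U x ∈ Matrix.unitaryGroup (Fin 2) ℂ)
    (B : Fin 3 → Mat4)
    (hB : ∀ y, (B y).IsHermitian)
    (hB2 : ∀ y, B y * B y = 1)
    (hopt : ((24 : ℂ))⁻¹ * ∑ y : Fin 3, ∑ x : Fin 3 → Fin 2,
        ((ρst ρ U x) * ((2 : ℂ)⁻¹ • (1 + ((-1 : ℂ) ^ (x y).val) • B y))).trace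
      = ((1 / 2 + 1 / Real.sqrt 6 : ℝ) : ℂ)) :
    ∀ x x', x ≠ x' →
      ((x' = bitcompl x ∨ par x = par x') → (ρst ρ U x * ρst ρ U x').trace = 0) ∧
      ((x' ≠ bitcompl x ∧ par x ≠ par x') → (ρst ρ U x * ρst ρ U x').trace = 1 / 3) := by
  have hpsd (x : Fin 3 → Fin 2) : (ρst ρ U x).PosSemidef := hρ.mul_mul_conjTranspose_same _
  have htr := trace_ρst hρtr hU
  obtain ⟨hS, hW, hcompl, hidem⟩ := optimal_consequences hpsd htr hB hB2
    (sum_trace_signedSum_mul_of_successProb_eq htr hopt)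
  have hclass := sum_parityClass_eq_one (sum_eq_two_smul_one hidem hS hW hcompl) hW
  have horth (z z' : Fin 3 → Fin 2) (hne : z ≠ z') (hpar : par z = par z') :
      ρst ρ U z * ρst ρ U z' = 0 :=
    mul_eq_zero_of_par_eq hpsd hidem hclass hne hpar
  intro x x' hne
  refine ⟨?_, fun ⟨hx', hpar⟩ => trace_mul_eq_one_third htr hidem hS hclass horth hpar hx'⟩
  rintro (rfl | hpar)
  · rw [hcompl, trace_zero]
  · rw [horth x x' hne hpar, trace_zero]
end
end

section
/- (Theorem 2(ii), determination of Alice's unitaries) Let Q₁, P₁, R₁ be pairwise anticommuting 2×2 Hermitian matrices with Q₁² = P₁² = R₁² = I₂, and likewise Q₂, P₂, R₂ pairwise anticommuting 2×2 Hermitian involutions. Set ρ₀₀₀ = (I₄ − Q₁⊗Q₂ − P₁⊗P₂ − R₁⊗R₂)/4. If U is a 2×2 unitary with (U† ⊗ I₂) ρ₀₀₀ (U ⊗ I₂) = (I₄ − Q₁⊗Q₂ + P₁⊗P₂ + R₁⊗R₂)/4, then there exists z ∈ ℂ with |z| = 1 such that U = zQ₁. -/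
/-!
Conjugating by `U ⊗ I₂` acts on the first tensor factor only, and `Q₂, P₂, R₂` are linearly
independent (they are orthogonal for the trace form), so the hypothesis splits into
`U† Q₁ U = Q₁`, `U† P₁ U = -P₁`, `U† R₁ U = -R₁`, i.e. `U† X U = Q₁ X Q₁` for `X = Q₁, P₁, R₁`.
Hence `U Q₁` commutes with `Q₁, P₁, R₁`. Together with `I₂` these four matrices are
trace-orthogonal, so they span all 2×2 matrices, and `U Q₁` is a scalar `z`; then `U = z Q₁`,
and unitarity of `U` and of the Hermitian involution `Q₁` forces `|z| = 1`.
-/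

open Matrix
open scoped Kronecker

noncomputable section

namespace Matrix

section Trace

variable {n K : Type*} [Fintype n] [Field K]

theorem trace_mul_eq_zero_of_anticomm [CharZero K] {A B : Matrix n n K}
    (h : A * B + B * A = 0) : trace (A * B) = 0 := by
  have : trace (A * B) + trace (A * B) = 0 := by
    nth_rw 2 [trace_mul_comm]
    rw [← trace_add, h, trace_zero]
  exact add_self_eq_zero.mp this

variable [DecidableEq n]

theorem trace_eq_zero_of_anticomm [CharZero K] {A B : Matrix n n K} (hB : B * B = 1)
    (h : A * B + B * A = 0) : trace A = 0 := by
  have hAB : A * B * B + B * (A * B) = 0 := by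
    rw [mul_assoc, hB, ← mul_assoc, eq_neg_of_add_eq_zero_right h, neg_mul, mul_assoc, hB,
      mul_one, add_neg_cancel]
  simpa [mul_assoc, hB] using trace_mul_eq_zero_of_anticomm hAB

theorem linearIndependent_of_trace_mul {ι : Type*} {b : ι → Matrix n n K}
    (horth : Pairwise fun i j => trace (b i * b j) = 0) (hself : ∀ i, trace (b i * b i) ≠ 0) :
    LinearIndependent K b :=
  LinearMap.BilinForm.linearIndependent_of_iIsOrtho
    (B := (LinearMap.mul K (Matrix n n K)).compr₂ (traceLinearMap n K K)) horth hself

end Trace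

structure IsAnticommutingInvolutions {n R ι : Type*} [Fintype n] [DecidableEq n] [Ring R]
    (b : ι → Matrix n n R) : Prop where
  mul_self : ∀ i, b i * b i = 1
  anticomm : Pairwise fun i j => b i * b j + b j * b i = 0

theorem isAnticommutingInvolutions_vec3 {n R : Type*} [Fintype n] [DecidableEq n] [Ring R]
    {X Y Z : Matrix n n R} (hX : X * X = 1) (hY : Y * Y = 1) (hZ : Z * Z = 1)
    (hXY : X * Y + Y * X = 0) (hXZ : X * Z + Z * X = 0) (hYZ : Y * Z + Z * Y = 0) :
    IsAnticommutingInvolutions ![X, Y, Z] where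
  mul_self i := by fin_cases i <;> assumption
  anticomm i j hij := by
    fin_cases i <;> fin_cases j <;> simp only [ne_eq, not_true_eq_false] at hij <;>
      first | assumption | (rw [add_comm]; assumption)

namespace IsAnticommutingInvolutions

variable {n K ι : Type*} [Fintype n] [DecidableEq n] [Field K] [CharZero K]
  {b : ι → Matrix n n K}

theorem trace_eq_zero [Nontrivial ι] (hb : IsAnticommutingInvolutions b) (i : ι) :
    trace (b i) = 0 := by
  obtain ⟨j, hj⟩ := exists_ne i
  exact trace_eq_zero_of_anticomm (hb.mul_self j) (hb.anticomm hj.symm)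

theorem trace_mul_self_ne_zero [Nonempty n] (hb : IsAnticommutingInvolutions b) (i : ι) :
    trace (b i * b i) ≠ 0 := by
  simp [hb.mul_self i]

theorem linearIndependent [Nonempty n] (hb : IsAnticommutingInvolutions b) :
    LinearIndependent K b :=
  linearIndependent_of_trace_mul (fun _ _ hij => trace_mul_eq_zero_of_anticomm (hb.anticomm hij))
    hb.trace_mul_self_ne_zero

theorem linearIndependent_cons_one [Nonempty n] {k : ℕ} [Nontrivial (Fin k)]
    {b : Fin k → Matrix n n K} (hb : IsAnticommutingInvolutions b) :
    LinearIndependent K (Fin.cons 1 b : Fin (k + 1) → Matrix n n K) := by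
  refine linearIndependent_of_trace_mul (fun i j hij => ?_) fun i => ?_
  · cases i using Fin.cases <;> cases j using Fin.cases
    · exact absurd rfl hij
    · simpa using hb.trace_eq_zero _
    · simpa using hb.trace_eq_zero _
    · exact trace_mul_eq_zero_of_anticomm (hb.anticomm (by simpa using hij))
  · cases i using Fin.cases
    · simp
    · simpa using hb.trace_mul_self_ne_zero _

theorem mem_range_scalar_of_forall_commute {b : Fin 3 → Matrix (Fin 2) (Fin 2) K}
    (hb : IsAnticommutingInvolutions b) {W : Matrix (Fin 2) (Fin 2) K}
    (hW : ∀ i, Commute W (b i)) : W ∈ Set.range (scalar (Fin 2)) := by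
  have hspan : Submodule.span K (Set.range (Fin.cons 1 b : Fin 4 → _)) = ⊤ :=
    hb.linearIndependent_cons_one.span_eq_top_of_card_eq_finrank'
      (by simp [Module.finrank_matrix])
  have hcomm (X : Matrix (Fin 2) (Fin 2) K) : Commute W X := by
    have hX : X ∈ Submodule.span K (Set.range (Fin.cons 1 b : Fin 4 → _)) :=
      hspan ▸ Submodule.mem_top
    induction hX using Submodule.span_induction with
    | mem x hx =>
      obtain ⟨i, rfl⟩ := hx
      cases i using Fin.cases
      · exact Commute.one_right W
      · simpa using hW _
    | zero => exact Commute.zero_right W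
    | add x y _ _ hx hy => exact hx.add_right hy
    | smul a x _ hx => exact hx.smul_right a
  exact mem_range_scalar_iff_commute_single'.mpr fun i j => (hcomm _).symm

end IsAnticommutingInvolutions

section Kronecker

variable {l m m' n p ι R : Type*} [CommRing R]

theorem neg_kronecker (A : Matrix l m R) (B : Matrix n p R) : (-A) ⊗ₖ B = -(A ⊗ₖ B) := by
  ext; simp

theorem kronecker_one_mul_kronecker_mul_kronecker_one [Fintype m] [Fintype m'] [Fintype n]
    [DecidableEq n] (X : Matrix l m R) (A : Matrix m m' R) (Y : Matrix m' p R)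
    (B : Matrix n n R) :
    (X ⊗ₖ (1 : Matrix n n R)) * (A ⊗ₖ B) * (Y ⊗ₖ (1 : Matrix n n R)) = (X * A * Y) ⊗ₖ B := by
  rw [← mul_kronecker_mul, ← mul_kronecker_mul, one_mul, mul_one]

theorem eq_of_sum_kronecker_eq [Fintype ι] {A A' : ι → Matrix l m R} {B : ι → Matrix n p R}
    (hB : LinearIndependent R B) (h : ∑ i, A i ⊗ₖ B i = ∑ i, A' i ⊗ₖ B i) : A = A' := by
  funext i
  ext a c
  have hac : ∑ j, (A j a c - A' j a c) • B j = 0 := by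
    ext k l
    simpa [Matrix.sum_apply, sub_mul, sub_eq_zero] using congrFun (congrFun h (a, k)) (c, l)
  exact sub_eq_zero.mp (Fintype.linearIndependent_iff.mp hB _ hac i)

end Kronecker

section Conjugation

variable {n R : Type*} [Fintype n] [DecidableEq n] [Ring R]

theorem mul_mul_eq_neg_of_anticomm {S X : Matrix n n R} (hS : S * S = 1)
    (h : S * X + X * S = 0) : S * X * S = -X := by
  rw [eq_neg_of_add_eq_zero_left h, neg_mul, mul_assoc, hS, mul_one]

theorem commute_mul_of_conjTranspose_mul_mul_eq [StarRing R] {U S X : Matrix n n R}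
    (hU : U * Uᴴ = 1) (hS : S * S = 1) (h : Uᴴ * X * U = S * X * S) : Commute (U * S) X :=
  calc U * S * X = U * (S * X * S) * S := by simp only [mul_assoc, hS, mul_one]
    _ = U * (Uᴴ * X * U) * S := by rw [h]
    _ = X * (U * S) := by simp only [← mul_assoc, hU, one_mul]

end Conjugation

end Matrix

theorem norm_eq_one_of_smul_mem_unitary {𝕜 A : Type*} [RCLike 𝕜] [Ring A] [StarRing A]
    [Algebra 𝕜 A] [StarModule 𝕜 A] [Nontrivial A] {Q : A} (hQ : Q ∈ unitary A) {c : 𝕜}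
    (hc : c • Q ∈ unitary A) : ‖c‖ = 1 := by
  have h : algebraMap 𝕜 A ((‖c‖ : 𝕜) ^ 2) = algebraMap 𝕜 A 1 :=
    calc algebraMap 𝕜 A ((‖c‖ : 𝕜) ^ 2) = (star c * c) • (star Q * Q) := by
          rw [Unitary.star_mul_self_of_mem hQ, RCLike.star_def, RCLike.conj_mul,
            Algebra.algebraMap_eq_smul_one]
      _ = star (c • Q) * (c • Q) := by rw [star_smul, smul_mul_smul_comm]
      _ = algebraMap 𝕜 A 1 := by rw [Unitary.star_mul_self_of_mem hc, map_one]
  have hsq : ‖c‖ ^ 2 = 1 := by exact_mod_cast (algebraMap 𝕜 A).injective h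
  exact (pow_eq_one_iff_of_nonneg (norm_nonneg c) two_ne_zero).mp hsq

theorem alices_unitary_determined_general
    (Q₁ P₁ R₁ Q₂ P₂ R₂ : Mat2)
    (hQ₁ : Q₁.IsHermitian)
    (hQ₁2 : Q₁ * Q₁ = 1) (hP₁2 : P₁ * P₁ = 1) (hR₁2 : R₁ * R₁ = 1)
    (hQ₂2 : Q₂ * Q₂ = 1) (hP₂2 : P₂ * P₂ = 1) (hR₂2 : R₂ * R₂ = 1)
    (hQP₁ : Q₁ * P₁ + P₁ * Q₁ = 0) (hQR₁ : Q₁ * R₁ + R₁ * Q₁ = 0)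
    (hPR₁ : P₁ * R₁ + R₁ * P₁ = 0)
    (hQP₂ : Q₂ * P₂ + P₂ * Q₂ = 0) (hQR₂ : Q₂ * R₂ + R₂ * Q₂ = 0)
    (hPR₂ : P₂ * R₂ + R₂ * P₂ = 0)
    (U : Mat2) (hU : U ∈ Matrix.unitaryGroup (Fin 2) ℂ)
    (hconj : (Uᴴ ⊗ₖ (1 : Mat2)) *
        ((4 : ℂ)⁻¹ • ((1 : Mat4) - Q₁ ⊗ₖ Q₂ - P₁ ⊗ₖ P₂ - R₁ ⊗ₖ R₂)) *
        (U ⊗ₖ (1 : Mat2))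
      = (4 : ℂ)⁻¹ • ((1 : Mat4) - Q₁ ⊗ₖ Q₂ + P₁ ⊗ₖ P₂ + R₁ ⊗ₖ R₂)) :
    ∃ z : ℂ, ‖z‖ = 1 ∧ U = z • Q₁ := by
  have hA := isAnticommutingInvolutions_vec3 hQ₁2 hP₁2 hR₁2 hQP₁ hQR₁ hPR₁
  have hB := isAnticommutingInvolutions_vec3 hQ₂2 hP₂2 hR₂2 hQP₂ hQR₂ hPR₂
  have hsum : ∑ i, (Uᴴ * ![Q₁, P₁, R₁] i * U) ⊗ₖ ![Q₂, P₂, R₂] i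
      = ∑ i, (Q₁ * ![Q₁, P₁, R₁] i * Q₁) ⊗ₖ ![Q₂, P₂, R₂] i := by
    have hone : (Uᴴ ⊗ₖ (1 : Mat2)) * 1 * (U ⊗ₖ (1 : Mat2)) = 1 := by
      have hUU : Uᴴ * U = 1 := Unitary.star_mul_self_of_mem hU
      rw [mul_one, ← mul_kronecker_mul, hUU, one_mul, one_kronecker_one]
    simp only [Matrix.mul_smul, Matrix.smul_mul, Matrix.mul_sub, Matrix.sub_mul, hone,
      kronecker_one_mul_kronecker_mul_kronecker_one] at hconj
    simp only [Fin.sum_univ_three, cons_val_zero, cons_val_one, cons_val_two, head_cons,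
      tail_cons, hQ₁2, one_mul, mul_mul_eq_neg_of_anticomm hQ₁2 hQP₁,
      mul_mul_eq_neg_of_anticomm hQ₁2 hQR₁, neg_kronecker]
    linear_combination (norm := module) (-4 : ℂ) • hconj
  have hW (i : Fin 3) : Commute (U * Q₁) (![Q₁, P₁, R₁] i) :=
    commute_mul_of_conjTranspose_mul_mul_eq (Unitary.mul_star_self_of_mem hU) hQ₁2
      (congrFun (eq_of_sum_kronecker_eq hB.linearIndependent hsum) i)
  obtain ⟨z, hz⟩ := hA.mem_range_scalar_of_forall_commute hW
  have hUz : U = z • Q₁ :=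
    calc U = U * Q₁ * Q₁ := by rw [mul_assoc, hQ₁2, mul_one]
      _ = z • Q₁ := by rw [← hz, scalar_apply, ← smul_one_eq_diagonal, smul_mul, one_mul]
  have hQ₁U : Q₁ ∈ unitaryGroup (Fin 2) ℂ :=
    mem_unitaryGroup_iff'.mpr (by rw [star_eq_conjTranspose, hQ₁.eq, hQ₁2])
  exact ⟨z, norm_eq_one_of_smul_mem_unitary hQ₁U (hUz ▸ hU), hUz⟩

/-- Theorem 2(ii) (determination of Alice's unitaries): given two triples of
pairwise anticommuting Hermitian involutions {Q₁,P₁,R₁} and {Q₂,P₂,R₂}, set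
ρ₀₀₀ = (I₄ − Q₁⊗Q₂ − P₁⊗P₂ − R₁⊗R₂)/4. If a 2×2 unitary U satisfies
(U† ⊗ I₂) ρ₀₀₀ (U ⊗ I₂) = (I₄ − Q₁⊗Q₂ + P₁⊗P₂ + R₁⊗R₂)/4, then U = zQ₁ for
some unit complex number z. -/
theorem alices_unitary_determined
    (Q₁ P₁ R₁ Q₂ P₂ R₂ : Mat2)
    (hQ₁ : Q₁.IsHermitian) (hP₁ : P₁.IsHermitian) (hR₁ : R₁.IsHermitian)
    (hQ₂ : Q₂.IsHermitian) (hP₂ : P₂.IsHermitian) (hR₂ : R₂.IsHermitian)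
    (hQ₁2 : Q₁ * Q₁ = 1) (hP₁2 : P₁ * P₁ = 1) (hR₁2 : R₁ * R₁ = 1)
    (hQ₂2 : Q₂ * Q₂ = 1) (hP₂2 : P₂ * P₂ = 1) (hR₂2 : R₂ * R₂ = 1)
    (hQP₁ : Q₁ * P₁ + P₁ * Q₁ = 0) (hQR₁ : Q₁ * R₁ + R₁ * Q₁ = 0)
    (hPR₁ : P₁ * R₁ + R₁ * P₁ = 0)
    (hQP₂ : Q₂ * P₂ + P₂ * Q₂ = 0) (hQR₂ : Q₂ * R₂ + R₂ * Q₂ = 0)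
    (hPR₂ : P₂ * R₂ + R₂ * P₂ = 0)
    (U : Mat2) (hU : U ∈ Matrix.unitaryGroup (Fin 2) ℂ)
    (hconj : (Uᴴ ⊗ₖ (1 : Mat2)) *
        ((4 : ℂ)⁻¹ • ((1 : Mat4) - Q₁ ⊗ₖ Q₂ - P₁ ⊗ₖ P₂ - R₁ ⊗ₖ R₂)) *
        (U ⊗ₖ (1 : Mat2))
      = (4 : ℂ)⁻¹ • ((1 : Mat4) - Q₁ ⊗ₖ Q₂ + P₁ ⊗ₖ P₂ + R₁ ⊗ₖ R₂)) :
    ∃ z : ℂ, ‖z‖ = 1 ∧ U = z • Q₁ :=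
  alices_unitary_determined_general Q₁ P₁ R₁ Q₂ P₂ R₂ hQ₁ hQ₁2 hP₁2 hR₁2 hQ₂2 hP₂2 hR₂2 hQP₁ hQR₁
    hPR₁ hQP₂ hQR₂ hPR₂ U hU hconj
end
end
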